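/- arXiv:2002.01717 — 3 statements merged into one kernel-verified Lean document; each statement's English description precedes it below -/
import Mathlib

section
/- (Casimir conditions for in-domain actuated systems, Stokes–Dirac setting.) Let L > 0, P₁ ∈ ℝ^{n×n} symmetric, P₀ ∈ ℝ^{n×n} skew-symmetric, G₀ ∈ ℝ^{n×n} symmetric positive semidefinite, Q : [0,L] → ℝ^{n×n} continuously differentiable with Q(z) symmetric for all z, and B : [0,L] → ℝ^{n×m} continuous. Let A_c ∈ ℝ^{n_c×n_c} be skew-symmetric, S_c ∈ ℝ^{n_c×n_c} symmetric positive semidefinite, Q_c ∈ ℝ^{n_c×n_c} symmetric positive definite, and B_c ∈ ℝ^{n_c×m}. Suppose χ : ℝ × [0,L] → ℝⁿ (continuously differentiable) and v_c : ℝ → ℝ^{n_c} (differentiable) solve the closed-loop system ∂_t χ = P₁ ∂_z(Qχ) + (P₀ − G₀)Qχ + B(z)u(t), dv_c/dt = (A_c − S_c)Q_c v_c + B_c u_c(t), with power-conserving interconnection u(t) = −B_cᵀ Q_c v_c(t) and u_c(t) = ∫₀ᴸ B(z)ᵀ Q(z) χ(z,t) dz. Let Γ ∈ ℝ^{n_c}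 and Ψ : [0,L] → ℝⁿ be continuously differentiable and satisfy: (i) (A_c + S_c)Γ = 0; (ii) P₁ Ψ'(z) + (P₀ + G₀)Ψ(z) − B(z)B_cᵀ Γ = 0 for all z ∈ [0,L]; (iii) B_c B(z)ᵀ Ψ(z) = 0 for all z ∈ [0,L]; (iv) Ψ(L)ᵀ P₁ Q(L)χ(L,t) − Ψ(0)ᵀ P₁ Q(0)χ(0,t) = 0 for all t. Then the functional C(t) := Γᵀ v_c(t) + ∫₀ᴸ Ψ(z)ᵀ χ(z,t) dz is constant in t, i.e. C is a structural invariant (Casimir function) of the closed loop. -/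
/-!
Along the closed loop, the controller part of `C` changes at rate `Γᵀ B_c u_c`, since
`(A_c - S_c)ᵀ Γ = -(A_c + S_c) Γ = 0`. In the plant part, condition (ii) and the symmetry
properties of `P₁`, `P₀`, `G₀` turn the integrand `Ψᵀ ∂ₜχ` into the exact derivative
`∂_z (Ψᵀ P₁ Q χ)` minus `Γᵀ B_c Bᵀ Q χ`, while (iii) annihilates the actuation term `Ψᵀ B u`.
The exact derivative integrates to the boundary term (iv), which vanishes, and what is left
integrates to `-Γᵀ B_c u_c`, cancelling the controller's contribution.
-/

open Matrix MeasureTheory Set Function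

section

variable {n m k : ℕ}

theorem HasDerivAt.dotProduct {f g : ℝ → Fin n → ℝ} {f' g' : Fin n → ℝ} {x : ℝ}
    (hf : HasDerivAt f f' x) (hg : HasDerivAt g g' x) :
    HasDerivAt (fun x => f x ⬝ᵥ g x) (f' ⬝ᵥ g x + f x ⬝ᵥ g') x := by
  simp only [_root_.dotProduct, ← Finset.sum_add_distrib]
  exact HasDerivAt.fun_sum fun i _ => (hasDerivAt_pi.mp hf i).mul (hasDerivAt_pi.mp hg i)

theorem HasDerivAt.const_dotProduct (c : Fin n → ℝ) {f : ℝ → Fin n → ℝ} {f' : Fin n → ℝ}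
    {x : ℝ} (hf : HasDerivAt f f' x) : HasDerivAt (fun x => c ⬝ᵥ f x) (c ⬝ᵥ f') x := by
  simpa using (hasDerivAt_const x c).dotProduct hf

theorem HasDerivAt.const_mulVec (A : Matrix (Fin n) (Fin m) ℝ) {f : ℝ → Fin m → ℝ}
    {f' : Fin m → ℝ} {x : ℝ} (hf : HasDerivAt f f' x) :
    HasDerivAt (fun x => A *ᵥ f x) (A *ᵥ f') x :=
  hasDerivAt_pi.mpr fun i => hf.const_dotProduct (A i)

theorem ContDiff.matrix_mulVec {A : ℝ → Matrix (Fin n) (Fin m) ℝ} {f : ℝ → Fin m → ℝ}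
    {r : WithTop ℕ∞} (hA : ∀ i j, ContDiff ℝ r fun x => A x i j) (hf : ContDiff ℝ r f) :
    ContDiff ℝ r fun x => A x *ᵥ f x :=
  contDiff_pi.mpr fun i => by
    simpa only [mulVec, dotProduct] using
      ContDiff.sum fun j _ => (hA i j).mul (contDiff_pi.mp hf j)

theorem intervalIntegral.integral_const_dotProduct (c : Fin n → ℝ) {f : ℝ → Fin n → ℝ}
    {a b : ℝ} (hf : IntervalIntegrable f volume a b) :
    ∫ x in a..b, c ⬝ᵥ f x = c ⬝ᵥ ∫ x in a..b, f x :=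
  (dotProductBilin ℝ ℝ c).toContinuousLinearMap.intervalIntegral_comp_comm hf

theorem ContDiff.exists_continuous_hasDerivAt_fst {E : Type*} [NormedAddCommGroup E]
    [NormedSpace ℝ E] {F : ℝ → ℝ → E} (hF : ContDiff ℝ 1 (uncurry F)) :
    ∃ F' : ℝ → ℝ → E, Continuous (uncurry F') ∧ ∀ t z, HasDerivAt (F · z) (F' t z) t := by
  refine ⟨fun t z => fderiv ℝ (uncurry F) (t, z) (1, 0),
    (ContinuousLinearMap.apply ℝ E ((1 : ℝ), (0 : ℝ))).continuous.comp
      (hF.continuous_fderiv one_ne_zero), fun t z => ?_⟩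
  exact ((hF.differentiable one_ne_zero) (t, z)).hasFDerivAt.comp_hasDerivAt t
    ((hasDerivAt_id t).prodMk (hasDerivAt_const t z))

theorem intervalIntegral.hasDerivAt_integral_of_continuous {E : Type*} [NormedAddCommGroup E]
    [NormedSpace ℝ E] {F F' : ℝ → ℝ → E} {a b : ℝ} (hF : Continuous (uncurry F))
    (hF' : Continuous (uncurry F')) (hFF' : ∀ t z, HasDerivAt (F · z) (F' t z) t) (t : ℝ) :
    HasDerivAt (fun s => ∫ z in a..b, F s z) (∫ z in a..b, F' t z) t := by
  have hFs : ∀ s, Continuous (F s) := fun s => hF.comp (continuous_const.prodMk continuous_id)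
  have hF's : ∀ s, Continuous (F' s) := fun s => hF'.comp (continuous_const.prodMk continuous_id)
  obtain ⟨M, hM⟩ := ((isCompact_closedBall t 1).prod (isCompact_uIcc (a := a) (b := b)))
    |>.exists_bound_of_continuousOn hF'.continuousOn
  refine (hasDerivAt_integral_of_dominated_loc_of_deriv_le (bound := fun _ => M)
    (Metric.closedBall_mem_nhds t one_pos) (.of_forall fun s => (hFs s).aestronglyMeasurable)
    ((hFs t).intervalIntegrable a b) (hF's t).aestronglyMeasurable
    (ae_of_all _ fun z hz s hs => hM (s, z) ⟨hs, uIoc_subset_uIcc hz⟩)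
    intervalIntegrable_const (ae_of_all _ fun z _ s _ => hFF' s z)).2

theorem dotProduct_mulVec_eq_zero_of_transpose_mulVec_eq_zero {M : Matrix (Fin n) (Fin m) ℝ}
    {v : Fin n → ℝ} (hv : Mᵀ *ᵥ v = 0) (x : Fin m → ℝ) : v ⬝ᵥ M *ᵥ x = 0 := by
  rw [← dotProduct_transpose_mulVec, hv, dotProduct_zero]

theorem mulVec_dotProduct_eq_dotProduct_transpose_mulVec (M : Matrix (Fin n) (Fin m) ℝ)
    (x : Fin m → ℝ) (y : Fin n → ℝ) : M *ᵥ x ⬝ᵥ y = x ⬝ᵥ Mᵀ *ᵥ y := by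
  rw [dotProduct_comm, dotProduct_transpose_mulVec]

theorem dotProduct_plant_eq {P₁ P₀ G₀ : Matrix (Fin n) (Fin n) ℝ} (hP₁ : P₁.IsSymm)
    (hP₀ : P₀ᵀ = -P₀) (hG₀ : G₀.IsSymm) {B : Matrix (Fin n) (Fin m) ℝ}
    {Bc : Matrix (Fin k) (Fin m) ℝ} {Γ : Fin k → ℝ} {ψ ψ' : Fin n → ℝ}
    (hii : P₁ *ᵥ ψ' + (P₀ + G₀) *ᵥ ψ - (B * Bcᵀ) *ᵥ Γ = 0) (hiii : Bc *ᵥ (Bᵀ *ᵥ ψ) = 0)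
    (φ φ' : Fin n → ℝ) (w : Fin k → ℝ) :
    ψ ⬝ᵥ (P₁ *ᵥ φ' + (P₀ - G₀) *ᵥ φ + B *ᵥ (Bcᵀ *ᵥ w))
      = ψ' ⬝ᵥ P₁ *ᵥ φ + ψ ⬝ᵥ P₁ *ᵥ φ' - (Γ ᵥ* Bc) ⬝ᵥ (Bᵀ *ᵥ φ) := by
  have hdiss : ψ ⬝ᵥ (P₀ - G₀) *ᵥ φ = (P₁ *ᵥ ψ' - (B * Bcᵀ) *ᵥ Γ) ⬝ᵥ φ := by
    have hskew : (P₀ - G₀)ᵀ = -(P₀ + G₀) := by rw [transpose_sub, hP₀, hG₀.eq]; abel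
    rw [← dotProduct_transpose_mulVec, dotProduct_comm, hskew, neg_mulVec,
      eq_sub_of_add_eq (sub_eq_zero.mp hii)]
    simp
  have hinput : ψ ⬝ᵥ B *ᵥ (Bcᵀ *ᵥ w) = 0 := by
    rw [mulVec_mulVec]
    refine dotProduct_mulVec_eq_zero_of_transpose_mulVec_eq_zero ?_ w
    rwa [transpose_mul, transpose_transpose, ← mulVec_mulVec]
  rw [dotProduct_add, dotProduct_add, hdiss, hinput, sub_dotProduct,
    mulVec_dotProduct_eq_dotProduct_transpose_mulVec, hP₁.eq, ← mulVec_mulVec,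
    mulVec_dotProduct_eq_dotProduct_transpose_mulVec, mulVec_transpose]
  ring

theorem integral_dotProduct_plant_eq {L : ℝ} (hL : 0 ≤ L) {P₁ P₀ G₀ : Matrix (Fin n) (Fin n) ℝ}
    (hP₁ : P₁.IsSymm) (hP₀ : P₀ᵀ = -P₀) (hG₀ : G₀.IsSymm) {B : ℝ → Matrix (Fin n) (Fin m) ℝ}
    (hB : ∀ i j, Continuous fun z => B z i j) {Bc : Matrix (Fin k) (Fin m) ℝ} {Γ : Fin k → ℝ}
    {Ψ φ : ℝ → Fin n → ℝ} (hΨ : ContDiff ℝ 1 Ψ) (hφ : ContDiff ℝ 1 φ)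
    (hii : ∀ z ∈ Icc 0 L, P₁ *ᵥ deriv Ψ z + (P₀ + G₀) *ᵥ Ψ z - (B z * Bcᵀ) *ᵥ Γ = 0)
    (hiii : ∀ z ∈ Icc 0 L, Bc *ᵥ ((B z)ᵀ *ᵥ Ψ z) = 0)
    (hbd : Ψ L ⬝ᵥ P₁ *ᵥ φ L - Ψ 0 ⬝ᵥ P₁ *ᵥ φ 0 = 0) (w : Fin k → ℝ) :
    ∫ z in 0..L, Ψ z ⬝ᵥ (P₁ *ᵥ deriv φ z + (P₀ - G₀) *ᵥ φ z + B z *ᵥ (Bcᵀ *ᵥ w))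
      = -((Γ ᵥ* Bc) ⬝ᵥ ∫ z in 0..L, (B z)ᵀ *ᵥ φ z) := by
  have hflux : ∀ z, HasDerivAt (fun z => Ψ z ⬝ᵥ P₁ *ᵥ φ z)
      (deriv Ψ z ⬝ᵥ P₁ *ᵥ φ z + Ψ z ⬝ᵥ P₁ *ᵥ deriv φ z) z := fun z =>
    (hΨ.differentiable one_ne_zero z).hasDerivAt.dotProduct
      ((hφ.differentiable one_ne_zero z).hasDerivAt.const_mulVec P₁)
  have hflux_cont : Continuous fun z => deriv Ψ z ⬝ᵥ P₁ *ᵥ φ z + Ψ z ⬝ᵥ P₁ *ᵥ deriv φ z :=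
    (hΨ.continuous_deriv_one.dotProduct (continuous_const.matrix_mulVec hφ.continuous)).add
      (hΨ.continuous.dotProduct (continuous_const.matrix_mulVec hφ.continuous_deriv_one))
  have hout_cont : Continuous fun z => (B z)ᵀ *ᵥ φ z :=
    (continuous_matrix fun i j => hB j i).matrix_mulVec hφ.continuous
  calc _ = ∫ z in 0..L, (deriv Ψ z ⬝ᵥ P₁ *ᵥ φ z + Ψ z ⬝ᵥ P₁ *ᵥ deriv φ z)
        - (Γ ᵥ* Bc) ⬝ᵥ ((B z)ᵀ *ᵥ φ z) := by
        refine intervalIntegral.integral_congr fun z hz => ?_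
        rw [uIcc_of_le hL] at hz
        exact dotProduct_plant_eq hP₁ hP₀ hG₀ (hii z hz) (hiii z hz) _ _ w
    _ = (Ψ L ⬝ᵥ P₁ *ᵥ φ L - Ψ 0 ⬝ᵥ P₁ *ᵥ φ 0) - (Γ ᵥ* Bc) ⬝ᵥ ∫ z in 0..L, (B z)ᵀ *ᵥ φ z := by
        rw [intervalIntegral.integral_sub (hflux_cont.intervalIntegrable _ _)
            ((continuous_const.dotProduct hout_cont).intervalIntegrable _ _),
          intervalIntegral.integral_eq_sub_of_hasDerivAt (fun z _ => hflux z)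
            (hflux_cont.intervalIntegrable _ _),
          intervalIntegral.integral_const_dotProduct _ (hout_cont.intervalIntegrable _ _)]
    _ = _ := by rw [hbd, zero_sub]

end

theorem stmt_4_general (n m nc : ℕ) (L : ℝ) (hL : 0 < L)
    (P₁ P₀ G₀ : Matrix (Fin n) (Fin n) ℝ)
    (hP₁ : P₁.IsSymm) (hP₀ : P₀ᵀ = -P₀) (hG₀ : G₀.PosSemidef)
    (Q : ℝ → Matrix (Fin n) (Fin n) ℝ)
    (hQdiff : ∀ i j, ContDiff ℝ 1 fun z => Q z i j)
    (B : ℝ → Matrix (Fin n) (Fin m) ℝ)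
    (hB : ∀ i j, Continuous fun z => B z i j)
    (Ac Sc Qc : Matrix (Fin nc) (Fin nc) ℝ)
    (hAc : Acᵀ = -Ac) (hSc : Sc.PosSemidef)
    (Bc : Matrix (Fin nc) (Fin m) ℝ)
    (χ : ℝ → ℝ → Fin n → ℝ)   -- plant state, χ t z
    (hχ : ContDiff ℝ 1 (Function.uncurry χ))
    (vc : ℝ → Fin nc → ℝ)     -- controller state
    -- power-conserving interconnection u = −B_cᵀ Q_c v_c, u_c = ∫₀ᴸ Bᵀ Q χ dz
    (u : ℝ → Fin m → ℝ) (hu : ∀ t, u t = -(Bcᵀ.mulVec (Qc.mulVec (vc t))))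
    (uc : ℝ → Fin m → ℝ)
    (huc : ∀ t, uc t = ∫ z in (0 : ℝ)..L, (B z)ᵀ.mulVec ((Q z).mulVec (χ t z)))
    -- closed-loop dynamics
    (hpde : ∀ t : ℝ, ∀ z ∈ Set.Icc (0 : ℝ) L,
      HasDerivAt (fun τ => χ τ z)
        (P₁.mulVec (deriv (fun ζ => (Q ζ).mulVec (χ t ζ)) z)
          + (P₀ - G₀).mulVec ((Q z).mulVec (χ t z))
          + (B z).mulVec (u t)) t)
    (hctrl : ∀ t : ℝ,
      HasDerivAt vc ((Ac - Sc).mulVec (Qc.mulVec (vc t)) + Bc.mulVec (uc t)) t)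
    (Γ : Fin nc → ℝ) (Ψ : ℝ → Fin n → ℝ) (hΨ : ContDiff ℝ 1 Ψ)
    -- (i) (A_c + S_c)Γ = 0
    (hi : (Ac + Sc).mulVec Γ = 0)
    -- (ii) P₁ Ψ' + (P₀ + G₀)Ψ − B B_cᵀ Γ = 0 on [0,L]
    (hii : ∀ z ∈ Set.Icc (0 : ℝ) L,
      P₁.mulVec (deriv Ψ z) + (P₀ + G₀).mulVec (Ψ z) - (B z * Bcᵀ).mulVec Γ = 0)
    -- (iii) B_c Bᵀ Ψ = 0 on [0,L]
    (hiii : ∀ z ∈ Set.Icc (0 : ℝ) L, Bc.mulVec ((B z)ᵀ.mulVec (Ψ z)) = 0)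
    -- (iv) boundary condition
    (hiv : ∀ t : ℝ,
      Ψ L ⬝ᵥ P₁.mulVec ((Q L).mulVec (χ t L))
        - Ψ 0 ⬝ᵥ P₁.mulVec ((Q 0).mulVec (χ t 0)) = 0)
    (C : ℝ → ℝ)
    (hC : ∀ t, C t = Γ ⬝ᵥ vc t + ∫ z in (0 : ℝ)..L, Ψ z ⬝ᵥ χ t z) :
    ∀ t₁ t₂ : ℝ, C t₁ = C t₂ := by
  obtain ⟨D, hDcont, hD⟩ := hχ.exists_continuous_hasDerivAt_fst
  have hplant : ∀ t, ∫ z in 0..L, Ψ z ⬝ᵥ D t z = -(Γ ⬝ᵥ Bc *ᵥ uc t) := fun t => by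
    have hφ : ContDiff ℝ 1 fun z => Q z *ᵥ χ t z :=
      ContDiff.matrix_mulVec hQdiff (hχ.comp (contDiff_const.prodMk contDiff_id))
    rw [intervalIntegral.integral_congr fun z hz => congrArg (Ψ z ⬝ᵥ ·)
        ((hD t z).unique (hpde t z (uIcc_of_le hL.le ▸ hz))),
      huc, dotProduct_mulVec, hu, ← mulVec_neg]
    exact integral_dotProduct_plant_eq hL.le hP₁ hP₀
      (isHermitian_iff_isSymm.mp hG₀.isHermitian) hB hΨ hφ hii hiii (hiv t) _
  have hctrl_out : (Ac - Sc)ᵀ *ᵥ Γ = 0 := by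
    rw [transpose_sub, hAc, (isHermitian_iff_isSymm.mp hSc.isHermitian).eq, ← neg_add',
      neg_mulVec, hi, neg_zero]
  have hC' : ∀ t, HasDerivAt C 0 t := fun t => by
    have hint := intervalIntegral.hasDerivAt_integral_of_continuous (a := 0) (b := L)
      (F := fun s z => Ψ z ⬝ᵥ χ s z) (F' := fun s z => Ψ z ⬝ᵥ D s z)
      ((hΨ.continuous.comp continuous_snd).dotProduct hχ.continuous)
      ((hΨ.continuous.comp continuous_snd).dotProduct hDcont)
      (fun s z => (hD s z).const_dotProduct (Ψ z)) t
    have hsum := ((hctrl t).const_dotProduct Γ).fun_add hint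
    rw [dotProduct_add, dotProduct_mulVec_eq_zero_of_transpose_mulVec_eq_zero hctrl_out, zero_add,
      hplant, add_neg_cancel] at hsum
    rwa [show C = _ from funext hC]
  intro t₁ t₂
  exact is_const_of_deriv_eq_zero (fun t => (hC' t).differentiableAt) (fun t => (hC' t).deriv) t₁ t₂

/-- Casimir conditions for in-domain actuated systems (Stokes–Dirac setting):
under conditions (i)–(iv), the functional
`C(t) = Γᵀ v_c(t) + ∫₀ᴸ Ψᵀ χ dz` is a structural invariant of the closed loop. -/
theorem stmt_4 (n m nc : ℕ) (L : ℝ) (hL : 0 < L)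
    (P₁ P₀ G₀ : Matrix (Fin n) (Fin n) ℝ)
    (hP₁ : P₁.IsSymm) (hP₀ : P₀ᵀ = -P₀) (hG₀ : G₀.PosSemidef)
    (Q : ℝ → Matrix (Fin n) (Fin n) ℝ)
    (hQdiff : ∀ i j, ContDiff ℝ 1 fun z => Q z i j)
    (hQsym : ∀ z, (Q z).IsSymm)
    (B : ℝ → Matrix (Fin n) (Fin m) ℝ)
    (hB : ∀ i j, Continuous fun z => B z i j)
    (Ac Sc Qc : Matrix (Fin nc) (Fin nc) ℝ)
    (hAc : Acᵀ = -Ac) (hSc : Sc.PosSemidef) (hQc : Qc.PosDef)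
    (Bc : Matrix (Fin nc) (Fin m) ℝ)
    (χ : ℝ → ℝ → Fin n → ℝ)   -- plant state, χ t z
    (hχ : ContDiff ℝ 1 (Function.uncurry χ))
    (vc : ℝ → Fin nc → ℝ)     -- controller state
    -- power-conserving interconnection u = −B_cᵀ Q_c v_c, u_c = ∫₀ᴸ Bᵀ Q χ dz
    (u : ℝ → Fin m → ℝ) (hu : ∀ t, u t = -(Bcᵀ.mulVec (Qc.mulVec (vc t))))
    (uc : ℝ → Fin m → ℝ)
    (huc : ∀ t, uc t = ∫ z in (0 : ℝ)..L, (B z)ᵀ.mulVec ((Q z).mulVec (χ t z)))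
    -- closed-loop dynamics
    (hpde : ∀ t : ℝ, ∀ z ∈ Set.Icc (0 : ℝ) L,
      HasDerivAt (fun τ => χ τ z)
        (P₁.mulVec (deriv (fun ζ => (Q ζ).mulVec (χ t ζ)) z)
          + (P₀ - G₀).mulVec ((Q z).mulVec (χ t z))
          + (B z).mulVec (u t)) t)
    (hctrl : ∀ t : ℝ,
      HasDerivAt vc ((Ac - Sc).mulVec (Qc.mulVec (vc t)) + Bc.mulVec (uc t)) t)
    (Γ : Fin nc → ℝ) (Ψ : ℝ → Fin n → ℝ) (hΨ : ContDiff ℝ 1 Ψ)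
    -- (i) (A_c + S_c)Γ = 0
    (hi : (Ac + Sc).mulVec Γ = 0)
    -- (ii) P₁ Ψ' + (P₀ + G₀)Ψ − B B_cᵀ Γ = 0 on [0,L]
    (hii : ∀ z ∈ Set.Icc (0 : ℝ) L,
      P₁.mulVec (deriv Ψ z) + (P₀ + G₀).mulVec (Ψ z) - (B z * Bcᵀ).mulVec Γ = 0)
    -- (iii) B_c Bᵀ Ψ = 0 on [0,L]
    (hiii : ∀ z ∈ Set.Icc (0 : ℝ) L, Bc.mulVec ((B z)ᵀ.mulVec (Ψ z)) = 0)
    -- (iv) boundary condition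
    (hiv : ∀ t : ℝ,
      Ψ L ⬝ᵥ P₁.mulVec ((Q L).mulVec (χ t L))
        - Ψ 0 ⬝ᵥ P₁.mulVec ((Q 0).mulVec (χ t 0)) = 0)
    (C : ℝ → ℝ)
    (hC : ∀ t, C t = Γ ⬝ᵥ vc t + ∫ z in (0 : ℝ)..L, Ψ z ⬝ᵥ χ t z) :
    ∀ t₁ t₂ : ℝ, C t₁ = C t₂ :=
  stmt_4_general n m nc L hL P₁ P₀ G₀ hP₁ hP₀ hG₀ Q hQdiff B hB Ac Sc Qc hAc hSc Bc χ hχ vc u hu uc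
    huc hpde hctrl Γ Ψ hΨ hi hii hiii hiv C hC
end

section
/- Let L > 0, ρ > 0, T > 0 be constants, g : [0,L] → ℝ continuous, and u : ℝ → ℝ continuous. Suppose w : ℝ × [0,L] → ℝ is twice continuously differentiable and, with p := ρ ∂_t w, satisfies ∂_t p(z,t) = T ∂_z² w(z,t) + g(z)u(t) for all (z,t), together with the boundary conditions w(0,t) = 0 and ∂_z w(L,t) = 0 for all t. Define the Hamiltonian H(t) := ∫₀ᴸ ( p(z,t)²/(2ρ) + (T/2)(∂_z w(z,t))² ) dz. Then H is differentiable and dH/dt = u(t) · ∫₀ᴸ g(z) p(z,t)/ρ dz for all t. -/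
/-!
Differentiate `H` under the integral sign. By Schwarz's theorem `∂_t ∂_z w = ∂_z ∂_t w`, so
`T ∂_z w ∂_t ∂_z w = T ∂_z (∂_t w ∂_z w) - T ∂_t w ∂_z² w`, and therefore
`dH/dt = ∫₀ᴸ ∂_t w (ρ ∂_t² w - T ∂_z² w) dz + T [∂_t w ∂_z w]₀ᴸ`
for every `C²` deflection. The boundary term vanishes because the string is clamped at `0`
(so `∂_t w = 0` there) and free at `L`, and the wave equation turns the integrand into
`u(t) g(z) p(z,t)/ρ`.
-/

open MeasureTheory Set intervalIntegral

noncomputable def partialFst (f : ℝ × ℝ → ℝ) (q : ℝ × ℝ) : ℝ := fderiv ℝ f q (1, 0)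

noncomputable def partialSnd (f : ℝ × ℝ → ℝ) (q : ℝ × ℝ) : ℝ := fderiv ℝ f q (0, 1)

section Partials

variable {f : ℝ × ℝ → ℝ}

theorem DifferentiableAt.hasDerivAt_partialFst {t z : ℝ} (hf : DifferentiableAt ℝ f (t, z)) :
    HasDerivAt (fun τ => f (τ, z)) (partialFst f (t, z)) t :=
  hf.hasFDerivAt.comp_hasDerivAt t ((hasDerivAt_id t).prodMk (hasDerivAt_const t z))

theorem DifferentiableAt.hasDerivAt_partialSnd {t z : ℝ} (hf : DifferentiableAt ℝ f (t, z)) :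
    HasDerivAt (fun ζ => f (t, ζ)) (partialSnd f (t, z)) z :=
  hf.hasFDerivAt.comp_hasDerivAt z ((hasDerivAt_const z t).prodMk (hasDerivAt_id z))

theorem ContDiff.partialFst {m n : WithTop ℕ∞} (hf : ContDiff ℝ n f) (hmn : m + 1 ≤ n) :
    ContDiff ℝ m (partialFst f) :=
  (hf.fderiv_right hmn).clm_apply contDiff_const

theorem ContDiff.partialSnd {m n : WithTop ℕ∞} (hf : ContDiff ℝ n f) (hmn : m + 1 ≤ n) :
    ContDiff ℝ m (partialSnd f) :=
  (hf.fderiv_right hmn).clm_apply contDiff_const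

theorem partialFst_partialSnd (hf : ContDiff ℝ 2 f) :
    partialFst (partialSnd f) = partialSnd (partialFst f) := by
  funext q
  have hdf : DifferentiableAt ℝ (fderiv ℝ f) q :=
    (hf.fderiv_right (m := 1) le_rfl).differentiable one_ne_zero q
  have hsymm := hf.contDiffAt.isSymmSndFDerivAt (x := q) (by simp)
  change fderiv ℝ (fun q => fderiv ℝ f q (0, 1)) q (1, 0) =
    fderiv ℝ (fun q => fderiv ℝ f q (1, 0)) q (0, 1)
  simpa [fderiv_clm_apply hdf (differentiableAt_const _)] using hsymm (1, 0) (0, 1)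

end Partials

theorem hasDerivAt_intervalIntegral_of_continuous_deriv {F F' : ℝ → ℝ → ℝ}
    (hF : ∀ t, Continuous (F t)) (hF' : Continuous (Function.uncurry F'))
    (hderiv : ∀ t z, HasDerivAt (F · z) (F' t z) t) (a b t₀ : ℝ) :
    HasDerivAt (fun t => ∫ z in a..b, F t z) (∫ z in a..b, F' t₀ z) t₀ := by
  obtain ⟨M, hM⟩ := ((isCompact_closedBall t₀ 1).prod (isCompact_uIcc (a := a) (b := b)))
    |>.exists_bound_of_continuousOn hF'.continuousOn
  refine (hasDerivAt_integral_of_dominated_loc_of_deriv_le (bound := fun _ => M)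
    (Metric.closedBall_mem_nhds t₀ one_pos)
    (.of_forall fun t => (hF t).aestronglyMeasurable) ((hF t₀).intervalIntegrable a b)
    (hF'.comp (Continuous.prodMk_right t₀)).aestronglyMeasurable ?_ intervalIntegrable_const
    (.of_forall fun z _ t _ => hderiv t z)).2
  exact .of_forall fun z hz t ht => hM (t, z) ⟨ht, uIoc_subset_uIcc hz⟩

theorem hasDerivAt_integral_energy {f : ℝ × ℝ → ℝ} (hf : ContDiff ℝ 2 f)
    (ρ T a b t : ℝ) :
    HasDerivAt
      (fun t => ∫ z in a..b, ρ / 2 * partialFst f (t, z) ^ 2 + T / 2 * partialSnd f (t, z) ^ 2)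
      ((∫ z in a..b, partialFst f (t, z) *
          (ρ * partialFst (partialFst f) (t, z) - T * partialSnd (partialSnd f) (t, z))) +
        T * (partialFst f (t, b) * partialSnd f (t, b) - partialFst f (t, a) * partialSnd f (t, a)))
      t := by
  set v := partialFst f
  set s := partialSnd f
  have hv : ContDiff ℝ 1 v := hf.partialFst le_rfl
  have hs : ContDiff ℝ 1 s := hf.partialSnd le_rfl
  have hv_t : Continuous (partialFst v) := (hv.partialFst (m := 0) (by simp)).continuous
  have hv_z : Continuous (partialSnd v) := (hv.partialSnd (m := 0) (by simp)).continuous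
  have hs_z : Continuous (partialSnd s) := (hs.partialSnd (m := 0) (by simp)).continuous
  have hdensity : ∀ t z, HasDerivAt (fun τ => ρ / 2 * v (τ, z) ^ 2 + T / 2 * s (τ, z) ^ 2)
      (ρ * v (t, z) * partialFst v (t, z) + T * s (t, z) * partialSnd v (t, z)) t := by
    intro t z
    have hst := (hs.differentiable one_ne_zero (t, z)).hasDerivAt_partialFst
    rw [partialFst_partialSnd hf] at hst
    have hvt := (hv.differentiable one_ne_zero (t, z)).hasDerivAt_partialFst
    refine (((hvt.fun_pow 2).const_mul (ρ / 2)).fun_add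
      ((hst.fun_pow 2).const_mul (T / 2))).congr_deriv ?_
    norm_num
    ring
  have hflux : ∀ z, HasDerivAt (fun ζ => v (t, ζ) * s (t, ζ))
      (partialSnd v (t, z) * s (t, z) + v (t, z) * partialSnd s (t, z)) z := fun z =>
    (hv.differentiable one_ne_zero (t, z)).hasDerivAt_partialSnd.mul
      (hs.differentiable one_ne_zero (t, z)).hasDerivAt_partialSnd
  have hflux_int : IntervalIntegrable
      (fun z => partialSnd v (t, z) * s (t, z) + v (t, z) * partialSnd s (t, z)) volume a b :=
    Continuous.intervalIntegrable (by fun_prop) a b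
  have hwork_int : IntervalIntegrable
      (fun z => v (t, z) * (ρ * partialFst v (t, z) - T * partialSnd s (t, z))) volume a b :=
    Continuous.intervalIntegrable (by fun_prop) a b
  convert hasDerivAt_intervalIntegral_of_continuous_deriv (fun t => by fun_prop) (by fun_prop)
    hdensity a b t using 1
  rw [← integral_eq_sub_of_hasDerivAt (fun z _ => hflux z) hflux_int,
    ← intervalIntegral.integral_const_mul, ← integral_add hwork_int (hflux_int.const_mul T)]
  congr 1; ext z; ring

section Curried

variable {w : ℝ → ℝ → ℝ}

theorem deriv_fst_eq_partialFst (hw : Differentiable ℝ (Function.uncurry w)) (t z : ℝ) :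
    deriv (fun τ => w τ z) t = partialFst (Function.uncurry w) (t, z) :=
  (hw _).hasDerivAt_partialFst.deriv

theorem deriv_snd_eq_partialSnd (hw : Differentiable ℝ (Function.uncurry w)) (t : ℝ) :
    (deriv fun ζ => w t ζ) = fun z => partialSnd (Function.uncurry w) (t, z) :=
  funext fun _ => (hw _).hasDerivAt_partialSnd.deriv

theorem deriv_deriv_snd_eq_partialSnd_partialSnd (hw : ContDiff ℝ 2 (Function.uncurry w))
    (t z : ℝ) :
    deriv (deriv fun ζ => w t ζ) z = partialSnd (partialSnd (Function.uncurry w)) (t, z) := by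
  rw [deriv_snd_eq_partialSnd (hw.differentiable two_ne_zero)]
  exact ((hw.partialSnd le_rfl).differentiable one_ne_zero _).hasDerivAt_partialSnd.deriv

end Curried

theorem stmt_6_general (L ρ T : ℝ) (hL : 0 < L) (hρ : 0 < ρ)
    (g : ℝ → ℝ)
    (u : ℝ → ℝ)
    (w : ℝ → ℝ → ℝ)                -- w t z : deflection at time t, place z
    (hw : ContDiff ℝ 2 (Function.uncurry w))
    (p : ℝ → ℝ → ℝ)                -- generalized momentum p = ρ ∂_t w
    (hp : ∀ t z, p t z = ρ * deriv (fun τ => w τ z) t)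
    (hpde : ∀ t : ℝ, ∀ z ∈ Set.Icc (0 : ℝ) L,
      HasDerivAt (fun τ => p τ z)
        (T * deriv (deriv fun ζ => w t ζ) z + g z * u t) t)
    (hbc0 : ∀ t : ℝ, w t 0 = 0)
    (hbcL : ∀ t : ℝ, deriv (fun ζ => w t ζ) L = 0)
    (H : ℝ → ℝ)
    (hH : ∀ t, H t = ∫ z in (0 : ℝ)..L,
      (p t z) ^ 2 / (2 * ρ) + T / 2 * (deriv (fun ζ => w t ζ) z) ^ 2) :
    ∀ t : ℝ, HasDerivAt H (u t * ∫ z in (0 : ℝ)..L, g z * p t z / ρ) t := by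
  have hwt := deriv_fst_eq_partialFst (hw.differentiable two_ne_zero)
  have hwz := deriv_snd_eq_partialSnd (hw.differentiable two_ne_zero)
  have hwzz := deriv_deriv_snd_eq_partialSnd_partialSnd hw
  set f := Function.uncurry w
  have hH' : H = fun t => ∫ z in (0 : ℝ)..L,
      ρ / 2 * partialFst f (t, z) ^ 2 + T / 2 * partialSnd f (t, z) ^ 2 := by
    funext t
    simp only [hH, hwz, hp, hwt]
    congr 1; funext z
    field_simp
  intro t
  have hforce : EqOn (fun z => partialFst f (t, z) *
        (ρ * partialFst (partialFst f) (t, z) - T * partialSnd (partialSnd f) (t, z)))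
      (fun z => u t * (g z * p t z / ρ)) (uIcc 0 L) := by
    intro z hz
    have hpt : HasDerivAt (fun τ => p τ z) (ρ * partialFst (partialFst f) (t, z)) t := by
      simp only [hp, hwt]
      exact ((hw.partialFst le_rfl).differentiable one_ne_zero _).hasDerivAt_partialFst.const_mul ρ
    have hwave := (hpde t z (uIcc_of_le hL.le ▸ hz)).unique hpt
    simp only [hp, hwt, hwzz, ← hwave]
    field_simp
    ring
  have hclamped : partialFst f (t, 0) = 0 := by
    rw [← hwt, show (fun τ => w τ 0) = fun _ => 0 from funext hbc0, deriv_const]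
  have hfree : partialSnd f (t, L) = 0 := by
    rw [← hbcL t, hwz]
  rw [hH']
  convert hasDerivAt_integral_energy hw ρ T 0 L t using 1
  rw [hclamped, hfree, integral_congr hforce, intervalIntegral.integral_const_mul]
  ring

/-- Energy balance for the in-domain actuated vibrating string
`ρ ∂_t² w = T ∂_z² w + g(z)u(t)`, clamped at `z = 0` and free at `z = L`:
`dH/dt = u(t)·∫₀ᴸ g p/ρ dz` for `H = ∫₀ᴸ (p²/(2ρ) + (T/2)(∂_z w)²) dz`. -/
theorem stmt_6 (L ρ T : ℝ) (hL : 0 < L) (hρ : 0 < ρ) (hT : 0 < T)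
    (g : ℝ → ℝ) (hg : ContinuousOn g (Set.Icc 0 L))
    (u : ℝ → ℝ) (hu : Continuous u)
    (w : ℝ → ℝ → ℝ)                -- w t z : deflection at time t, place z
    (hw : ContDiff ℝ 2 (Function.uncurry w))
    (p : ℝ → ℝ → ℝ)                -- generalized momentum p = ρ ∂_t w
    (hp : ∀ t z, p t z = ρ * deriv (fun τ => w τ z) t)
    (hpde : ∀ t : ℝ, ∀ z ∈ Set.Icc (0 : ℝ) L,
      HasDerivAt (fun τ => p τ z)
        (T * deriv (deriv fun ζ => w t ζ) z + g z * u t) t)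
    (hbc0 : ∀ t : ℝ, w t 0 = 0)
    (hbcL : ∀ t : ℝ, deriv (fun ζ => w t ζ) L = 0)
    (H : ℝ → ℝ)
    (hH : ∀ t, H t = ∫ z in (0 : ℝ)..L,
      (p t z) ^ 2 / (2 * ρ) + T / 2 * (deriv (fun ζ => w t ζ) z) ^ 2) :
    ∀ t : ℝ, HasDerivAt H (u t * ∫ z in (0 : ℝ)..L, g z * p t z / ρ) t :=
  stmt_6_general L ρ T hL hρ g u w hw p hp hpde hbc0 hbcL H hH
end

section
/- (Equivalence of the two in-domain control laws for the string.) Let L > 0, and let g : [0,L] → ℝ be integrable; define Ψ₁(z) := −∫_zᴸ g(s) ds. Let w, w^d : [0,L] → ℝ be continuously differentiable with w(0) = w^d(0) = 0, and set q := w' and q^d := (w^d)'. Then for all constants c₁, c₂, u_s, ȳ ∈ ℝ, the control law obtained in the Stokes–Dirac framework, u_SD := −c₁( −∫₀ᴸ Ψ₁ q dz + ∫₀ᴸ Ψ₁ q^d dz ) − c₂ ȳ + u_s, equals the control law obtained in the jet-bundle framework, u_JB := −c₁( ∫₀ᴸ g w dz − ∫₀ᴸ g w^d dz ) − c₂ ȳ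 + u_s. -/
/-!
Writing `Ψ₁ z = ∫_L^z g`, the function `Ψ₁` is absolutely continuous with `Ψ₁' = g` almost
everywhere (Lebesgue differentiation) and `Ψ₁ L = 0`. Integrating by parts against
`q = w'` with `w 0 = 0` therefore kills both boundary terms and gives
`∫₀ᴸ Ψ₁ q = -∫₀ᴸ g w`, and likewise for `w^d`; the two control laws then agree term by term.
-/

open MeasureTheory Set

theorem intervalIntegral.integral_primitive_mul_deriv {g w : ℝ → ℝ} {a b : ℝ}
    (hg : IntervalIntegrable g volume a b) (hw : AbsolutelyContinuousOnInterval w a b)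
    (hw₀ : w a = 0) :
    ∫ x in a..b, (∫ s in b..x, g s) * deriv w x = -∫ x in a..b, g x * w x := by
  have hΨ : AbsolutelyContinuousOnInterval (fun x ↦ ∫ s in b..x, g s) a b :=
    hg.absolutelyContinuousOnInterval_intervalIntegral right_mem_uIcc
  have hderiv : ∫ x in a..b, deriv (fun x ↦ ∫ s in b..x, g s) x * w x
      = ∫ x in a..b, g x * w x := by
    refine intervalIntegral.integral_congr_ae ?_
    filter_upwards [hg.ae_hasDerivAt_integral] with x hx hxab
    rw [(hx (uIoc_subset_uIcc hxab) b right_mem_uIcc).deriv]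
  rw [hΨ.integral_mul_deriv_eq_deriv_mul hw, hderiv, hw₀]
  simp

theorem stmt_11_general (L : ℝ)
    (g : ℝ → ℝ) (hg : IntervalIntegrable g MeasureTheory.volume 0 L)
    (Ψ₁ : ℝ → ℝ) (hΨ₁ : ∀ z, Ψ₁ z = -∫ s in z..L, g s)
    (w wd : ℝ → ℝ) (hw : ContDiff ℝ 1 w) (hwd : ContDiff ℝ 1 wd)
    (hw0 : w 0 = 0) (hwd0 : wd 0 = 0)
    (q qd : ℝ → ℝ) (hq : ∀ z, q z = deriv w z) (hqd : ∀ z, qd z = deriv wd z) :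
    ∀ c₁ c₂ us ybar : ℝ,
      -c₁ * (-(∫ z in (0 : ℝ)..L, Ψ₁ z * q z)
          + ∫ z in (0 : ℝ)..L, Ψ₁ z * qd z) - c₂ * ybar + us =
        -c₁ * ((∫ z in (0 : ℝ)..L, g z * w z)
          - ∫ z in (0 : ℝ)..L, g z * wd z) - c₂ * ybar + us := by
  intro c₁ c₂ us ybar
  have hΨ₁' : Ψ₁ = fun z ↦ ∫ s in L..z, g s := by
    funext z
    rw [hΨ₁, intervalIntegral.integral_symm, neg_neg]
  rw [funext hq, funext hqd, hΨ₁',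
    intervalIntegral.integral_primitive_mul_deriv hg
      hw.contDiffOn.absolutelyContinuousOnInterval hw0,
    intervalIntegral.integral_primitive_mul_deriv hg
      hwd.contDiffOn.absolutelyContinuousOnInterval hwd0]
  ring

/-- Equivalence of the two in-domain control laws for the string: the
Stokes–Dirac control law `u_SD = −c₁(−∫₀ᴸΨ₁q dz + ∫₀ᴸΨ₁q^d dz) − c₂ȳ + u_s`
coincides with the jet-bundle control law
`u_JB = −c₁(∫₀ᴸ g w dz − ∫₀ᴸ g w^d dz) − c₂ȳ + u_s`. -/
theorem stmt_11 (L : ℝ) (hL : 0 < L)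
    (g : ℝ → ℝ) (hg : IntervalIntegrable g MeasureTheory.volume 0 L)
    (Ψ₁ : ℝ → ℝ) (hΨ₁ : ∀ z, Ψ₁ z = -∫ s in z..L, g s)
    (w wd : ℝ → ℝ) (hw : ContDiff ℝ 1 w) (hwd : ContDiff ℝ 1 wd)
    (hw0 : w 0 = 0) (hwd0 : wd 0 = 0)
    (q qd : ℝ → ℝ) (hq : ∀ z, q z = deriv w z) (hqd : ∀ z, qd z = deriv wd z) :
    ∀ c₁ c₂ us ybar : ℝ,
      -c₁ * (-(∫ z in (0 : ℝ)..L, Ψ₁ z * q z)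
          + ∫ z in (0 : ℝ)..L, Ψ₁ z * qd z) - c₂ * ybar + us =
        -c₁ * ((∫ z in (0 : ℝ)..L, g z * w z)
          - ∫ z in (0 : ℝ)..L, g z * wd z) - c₂ * ybar + us :=
  stmt_11_general L g hg Ψ₁ hΨ₁ w wd hw hwd hw0 hwd0 q qd hq hqd
end
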